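/- Let A be a d × r real matrix with nonnegative entries, Z = (Z₁,…,Z_r) a standard Gaussian vector in ℝ^r, and X = AZ. Then X satisfies the componentwise co-monotony principle: for all bounded Borel functions Φ, Ψ : ℝ^d → ℝ that are componentwise co-monotone, E[Φ(X)Ψ(X)] ≥ E[Φ(X)]E[Ψ(X)]. -/

import Mathlib

open MeasureTheory ProbabilityTheory

/-!
Harris' inequality: under a product of probability measures on linearly ordered spaces, two
bounded coordinatewise monotone functions are positively correlated. In one coordinate this is
Chebyshev's integral inequality, obtained by integrating `(f x - f y) * (g x - g y) ≥ 0` against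
`μ ⊗ μ`. For the induction step, integrate out the remaining coordinates by Fubini: the partial
integrals of monotone functions are again monotone, and the inductive hypothesis holds on each
section. A matrix with nonnegative entries is monotone for the coordinatewise order, so `Φ ∘ A`
and `Ψ ∘ A` are co-monotone functions of the independent Gaussian coordinates of `Z`.
-/

theorem Monovary.integral_mul_integral_le_integral_mul {α : Type*} [MeasurableSpace α]
    {μ : Measure α} [IsProbabilityMeasure μ] {f g : α → ℝ} (hfg : Monovary f g)
    (hf : Integrable f μ) (hg : Integrable g μ) (hfg_int : Integrable (f * g) μ) :
    (∫ x, f x ∂μ) * ∫ x, g x ∂μ ≤ ∫ x, f x * g x ∂μ := by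
  have rearrangement : ∫ p : α × α, (f p.1 * g p.2 + g p.1 * f p.2) ∂μ.prod μ
      ≤ ∫ p : α × α, ((f * g) p.1 + (f * g) p.2) ∂μ.prod μ := by
    refine integral_mono ((hf.mul_prod hg).add (hg.mul_prod hf))
      ((hfg_int.comp_fst μ).add (hfg_int.comp_snd μ)) fun p => ?_
    simpa only [Pi.mul_apply, mul_comm (g p.1)] using hfg.mul_add_mul_le_mul_add_mul p.1 p.2
  rw [integral_add (hf.mul_prod hg) (hg.mul_prod hf),
    integral_add (hfg_int.comp_fst μ) (hfg_int.comp_snd μ), integral_prod_mul, integral_prod_mul,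
    integral_fun_fst, integral_fun_snd] at rearrangement
  simp only [probReal_univ, one_smul, Pi.mul_apply] at rearrangement
  linarith

section Harris

variable {α β : Type*} [MeasurableSpace α] [MeasurableSpace β]

theorem Monotone.integral_prod_right [Preorder α] [Preorder β] {ν : Measure β}
    [IsFiniteMeasure ν] {f : α × β → ℝ} (hf : Monotone f) (hfm : Measurable f) {C : ℝ}
    (hfC : ∀ p, ‖f p‖ ≤ C) : Monotone fun x => ∫ y, f (x, y) ∂ν := fun x x' hx =>
  have hsec : ∀ z, Integrable (fun y => f (z, y)) ν := fun _ =>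
    .of_bound (hfm.comp measurable_prodMk_left).aestronglyMeasurable C (ae_of_all _ fun _ => hfC _)
  integral_mono (hsec x) (hsec x') fun _ => hf ⟨hx, le_rfl⟩

theorem integral_mul_integral_le_integral_mul_prod [LinearOrder α] [Preorder β]
    {μ : Measure α} {ν : Measure β} [IsProbabilityMeasure μ] [IsProbabilityMeasure ν]
    {f g : α × β → ℝ} (hf : Monotone f) (hg : Monotone g)
    (hfm : Measurable f) (hgm : Measurable g) {Cf Cg : ℝ}
    (hfC : ∀ p, ‖f p‖ ≤ Cf) (hgC : ∀ p, ‖g p‖ ≤ Cg)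
    (hsec : ∀ x, (∫ y, f (x, y) ∂ν) * (∫ y, g (x, y) ∂ν) ≤ ∫ y, f (x, y) * g (x, y) ∂ν) :
    (∫ p, f p ∂μ.prod ν) * ∫ p, g p ∂μ.prod ν ≤ ∫ p, f p * g p ∂μ.prod ν := by
  set F := fun x => ∫ y, f (x, y) ∂ν
  set G := fun x => ∫ y, g (x, y) ∂ν
  have hfi : Integrable f (μ.prod ν) := .of_bound hfm.aestronglyMeasurable Cf (ae_of_all _ hfC)
  have hgi : Integrable g (μ.prod ν) := .of_bound hgm.aestronglyMeasurable Cg (ae_of_all _ hgC)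
  have hfgi : Integrable (fun p => f p * g p) (μ.prod ν) :=
    hgi.bdd_mul hfm.aestronglyMeasurable (ae_of_all _ hfC)
  have hFC : ∀ x, ‖F x‖ ≤ Cf := fun x => by
    simpa using norm_integral_le_of_norm_le_const (μ := ν) (ae_of_all _ fun y => hfC (x, y))
  have hFGi : Integrable (F * G) μ :=
    hgi.integral_prod_left.bdd_mul hfi.integral_prod_left.aestronglyMeasurable (ae_of_all _ hFC)
  calc (∫ p, f p ∂μ.prod ν) * ∫ p, g p ∂μ.prod ν = (∫ x, F x ∂μ) * ∫ x, G x ∂μ := by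
        rw [integral_prod f hfi, integral_prod g hgi]
    _ ≤ ∫ x, F x * G x ∂μ :=
        ((hf.integral_prod_right hfm hfC).monovary
          (hg.integral_prod_right hgm hgC)).integral_mul_integral_le_integral_mul
          hfi.integral_prod_left hgi.integral_prod_left hFGi
    _ ≤ ∫ x, ∫ y, f (x, y) * g (x, y) ∂ν ∂μ := integral_mono hFGi hfgi.integral_prod_left hsec
    _ = ∫ p, f p * g p ∂μ.prod ν := (integral_prod _ hfgi).symm

theorem monotone_piFinSuccAbove_symm [Preorder α] {n : ℕ} (i : Fin (n + 1)) :
    Monotone (MeasurableEquiv.piFinSuccAbove (fun _ => α) i).symm := fun p q hpq => by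
  simpa [Prod.le_def, MeasurableEquiv.piFinSuccAbove_symm_apply, Fin.insertNthEquiv,
    Fin.insertNth_le_iff] using hpq

theorem Monotone.integral_mul_integral_le_integral_mul_pi [LinearOrder α] {n : ℕ}
    {μ : Fin n → Measure α} [∀ i, IsProbabilityMeasure (μ i)] {f g : (Fin n → α) → ℝ}
    (hf : Monotone f) (hg : Monotone g) (hfm : Measurable f) (hgm : Measurable g) {Cf Cg : ℝ}
    (hfC : ∀ x, ‖f x‖ ≤ Cf) (hgC : ∀ x, ‖g x‖ ≤ Cg) :
    (∫ x, f x ∂Measure.pi μ) * ∫ x, g x ∂Measure.pi μ ≤ ∫ x, f x * g x ∂Measure.pi μ := by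
  induction n with
  | zero => simp [integral_unique]
  | succ n ih =>
    set e := (MeasurableEquiv.piFinSuccAbove (fun _ => α) 0).symm
    have he : MeasurePreserving e _ _ := (measurePreserving_piFinSuccAbove μ 0).symm
    have he_mono : Monotone e := monotone_piFinSuccAbove_symm 0
    rw [← he.integral_comp' f, ← he.integral_comp' g, ← he.integral_comp' fun x => f x * g x]
    refine integral_mul_integral_le_integral_mul_prod (hf.comp he_mono) (hg.comp he_mono)
      (hfm.comp e.measurable) (hgm.comp e.measurable) (fun _ => hfC _) (fun _ => hgC _) fun t => ?_
    exact ih (fun y y' hy => hf (he_mono ⟨le_rfl, hy⟩)) (fun y y' hy => hg (he_mono ⟨le_rfl, hy⟩))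
      ((hfm.comp e.measurable).comp measurable_prodMk_left)
      ((hgm.comp e.measurable).comp measurable_prodMk_left) (fun _ => hfC _) (fun _ => hgC _)

theorem Antitone.integral_mul_integral_le_integral_mul_pi [LinearOrder α] {n : ℕ}
    {μ : Fin n → Measure α} [∀ i, IsProbabilityMeasure (μ i)] {f g : (Fin n → α) → ℝ}
    (hf : Antitone f) (hg : Antitone g) (hfm : Measurable f) (hgm : Measurable g) {Cf Cg : ℝ}
    (hfC : ∀ x, ‖f x‖ ≤ Cf) (hgC : ∀ x, ‖g x‖ ≤ Cg) :
    (∫ x, f x ∂Measure.pi μ) * ∫ x, g x ∂Measure.pi μ ≤ ∫ x, f x * g x ∂Measure.pi μ := by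
  simpa [integral_neg] using hf.neg.integral_mul_integral_le_integral_mul_pi (μ := μ) hg.neg
    hfm.neg hgm.neg (Cf := Cf) (Cg := Cg) (by simpa using hfC) (by simpa using hgC)

end Harris

theorem Matrix.monotone_mulVec_of_nonneg {m n : Type*} [Fintype n] {A : Matrix m n ℝ}
    (hA : ∀ i j, 0 ≤ A i j) : Monotone A.mulVec := fun _ _ hxy i =>
  dotProduct_le_dotProduct_of_nonneg_left hxy (hA i)

theorem comonotony_nonneg_matrix_gaussian_general
    {Ω : Type*} [MeasurableSpace Ω] (P : Measure Ω)
    {d r : ℕ} (A : Matrix (Fin d) (Fin r) ℝ) (hA : ∀ i j, 0 ≤ A i j)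
    (Z : Ω → (Fin r → ℝ)) (hZm : Measurable Z)
    (hZ : Measure.map Z P = Measure.pi (fun _ : Fin r => gaussianReal 0 1))
    (Φ Ψ : (Fin d → ℝ) → ℝ) (hΦm : Measurable Φ) (hΨm : Measurable Ψ)
    (hΦb : ∃ C, ∀ x, |Φ x| ≤ C) (hΨb : ∃ C, ∀ x, |Ψ x| ≤ C)
    (hmono : (Monotone Φ ∧ Monotone Ψ) ∨ (Antitone Φ ∧ Antitone Ψ)) :
    ∫ ω, Φ (A.mulVec (Z ω)) * Ψ (A.mulVec (Z ω)) ∂P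
      ≥ (∫ ω, Φ (A.mulVec (Z ω)) ∂P) * ∫ ω, Ψ (A.mulVec (Z ω)) ∂P := by
  obtain ⟨CΦ, hΦC⟩ := hΦb
  obtain ⟨CΨ, hΨC⟩ := hΨb
  have hAmono := Matrix.monotone_mulVec_of_nonneg hA
  have hAm : Measurable A.mulVec := (continuous_const.matrix_mulVec continuous_id).measurable
  have hfm : Measurable fun x => Φ (A.mulVec x) := hΦm.comp hAm
  have hgm : Measurable fun x => Ψ (A.mulVec x) := hΨm.comp hAm
  have harris : (∫ x, Φ (A.mulVec x) ∂P.map Z) * ∫ x, Ψ (A.mulVec x) ∂P.map Z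
      ≤ ∫ x, Φ (A.mulVec x) * Ψ (A.mulVec x) ∂P.map Z := by
    rw [hZ]
    rcases hmono with ⟨hΦ, hΨ⟩ | ⟨hΦ, hΨ⟩
    · exact (hΦ.comp hAmono).integral_mul_integral_le_integral_mul_pi (hΨ.comp hAmono) hfm hgm
        (fun _ => hΦC _) (fun _ => hΨC _)
    · exact (hΦ.comp_monotone hAmono).integral_mul_integral_le_integral_mul_pi
        (hΨ.comp_monotone hAmono) hfm hgm (fun _ => hΦC _) (fun _ => hΨC _)
  rwa [integral_map hZm.aemeasurable hfm.aestronglyMeasurable,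
    integral_map hZm.aemeasurable hgm.aestronglyMeasurable,
    integral_map (f := fun x => Φ (A.mulVec x) * Ψ (A.mulVec x)) hZm.aemeasurable
      (hfm.mul hgm).aestronglyMeasurable] at harris

theorem comonotony_nonneg_matrix_gaussian
    {Ω : Type*} [MeasurableSpace Ω] (P : Measure Ω) [IsProbabilityMeasure P]
    {d r : ℕ} (A : Matrix (Fin d) (Fin r) ℝ) (hA : ∀ i j, 0 ≤ A i j)
    (Z : Ω → (Fin r → ℝ)) (hZm : Measurable Z)
    (hZ : Measure.map Z P = Measure.pi (fun _ : Fin r => gaussianReal 0 1))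
    (Φ Ψ : (Fin d → ℝ) → ℝ) (hΦm : Measurable Φ) (hΨm : Measurable Ψ)
    (hΦb : ∃ C, ∀ x, |Φ x| ≤ C) (hΨb : ∃ C, ∀ x, |Ψ x| ≤ C)
    (hmono : (Monotone Φ ∧ Monotone Ψ) ∨ (Antitone Φ ∧ Antitone Ψ)) :
    ∫ ω, Φ (A.mulVec (Z ω)) * Ψ (A.mulVec (Z ω)) ∂P
      ≥ (∫ ω, Φ (A.mulVec (Z ω)) ∂P) * ∫ ω, Ψ (A.mulVec (Z ω)) ∂P :=
  comonotony_nonneg_matrix_gaussian_general P A hA Z hZm hZ Φ Ψ hΦm hΨm hΦb hΨb hmono
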